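/- Bias of DR-IC in general: E[DR-IC(τ)] − V^π = E_{x∼ν_C}[ 𝟙{D_KL(x) ≥ τ} Σ_a π(a|x) ε_IB(x,a) ], i.e., the bias is exactly the π-weighted reward-model error restricted to high-KL contexts. -/
import Mathlib


/-- Bias of DR-IC in general:
`E[DR-IC(τ)] − V^π = E_{x∼ν_C}[𝟙{D_KL(x) ≥ τ} Σ_a π(a|x) ε_IB(x,a)]`, the
`π`-weighted reward-model error restricted to high-KL contexts. -/
theorem dr_ic_bias {X A Rv : Type} [Fintype X] [Fintype A] [Fintype Rv]
    (νC : X → ℝ) (π μl : X → A → ℝ) (νR : X → A → Rv → ℝ) (rv : Rv → ℝ)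
    (rhat : X → A → ℝ) (τ : ℝ)
    (hνC : ∀ x, 0 ≤ νC x) (hνCsum : ∑ x, νC x = 1)
    (hπ : ∀ x a, 0 ≤ π x a) (hπsum : ∀ x, ∑ a, π x a = 1)
    (hμ : ∀ x a, 0 ≤ μl x a) (hμsum : ∀ x, ∑ a, μl x a = 1)
    (hνR : ∀ x a ρ, 0 ≤ νR x a ρ) (hνRsum : ∀ x a, ∑ ρ, νR x a ρ = 1)
    (habs : ∀ x a, 0 < π x a → 0 < μl x a)
    (rbar eps : X → A → ℝ)
    (hrbar : ∀ x a, rbar x a = ∑ ρ, νR x a ρ * rv ρ)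
    (heps : ∀ x a, eps x a = rhat x a - rbar x a)
    (DKL : X → ℝ)
    (hDKL : ∀ x, DKL x = ∑ a, π x a * Real.log (π x a / μl x a)) :
    (∑ x, νC x * ∑ a, μl x a * ∑ ρ, νR x a ρ *
        ((rv ρ - rhat x a) * (π x a / μl x a) * (if DKL x < τ then (1:ℝ) else 0)
          + ∑ a', π x a' * rhat x a'))
      - (∑ x, νC x * ∑ a, π x a * rbar x a)
    = ∑ x, νC x * ((if τ ≤ DKL x then (1:ℝ) else 0) * ∑ a, π x a * eps x a) := by
  rw [← Finset.sum_sub_distrib]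
  refine Finset.sum_congr rfl (fun x _ => ?_)
  have hμπ : ∀ a, μl x a * (π x a / μl x a) = π x a := by
    intro a
    by_cases h : μl x a = 0
    · have hp : π x a = 0 := by
        by_contra hp
        have := habs x a (lt_of_le_of_ne (hπ x a) (Ne.symm hp))
        exact absurd h (ne_of_gt this)
      simp [h, hp]
    · field_simp
  set ind : ℝ := if DKL x < τ then (1:ℝ) else 0 with hind
  set C : ℝ := ∑ a', π x a' * rhat x a' with hC
  have hinner : ∀ a, ∑ ρ, νR x a ρ *
      ((rv ρ - rhat x a) * (π x a / μl x a) * ind + C)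
      = (rbar x a - rhat x a) * (π x a / μl x a) * ind + C := by
    intro a
    have h0 : ∀ ρ, νR x a ρ * ((rv ρ - rhat x a) * (π x a / μl x a) * ind + C)
        = (νR x a ρ * rv ρ) * ((π x a / μl x a) * ind)
          - νR x a ρ * (rhat x a * ((π x a / μl x a) * ind)) + νR x a ρ * C := by
      intro ρ; ring
    simp only [h0, Finset.sum_add_distrib, Finset.sum_sub_distrib,
      ← Finset.sum_mul, ← Finset.mul_sum, hνRsum, ← hrbar]
    ring
  simp only [hinner]
  have hsum : ∑ a, μl x a *
      ((rbar x a - rhat x a) * (π x a / μl x a) * ind + C)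
      = ind * ∑ a, π x a * (rbar x a - rhat x a) + C := by
    have h0 : ∀ a, μl x a * ((rbar x a - rhat x a) * (π x a / μl x a) * ind + C)
        = (μl x a * (π x a / μl x a)) * ((rbar x a - rhat x a) * ind)
          + μl x a * C := by
      intro a; ring
    simp only [h0, hμπ, Finset.sum_add_distrib, ← Finset.sum_mul, hμsum,
      one_mul, Finset.mul_sum]
    congr 1
    exact Finset.sum_congr rfl fun a _ => by ring
  rw [hsum]
  have hind' : (if τ ≤ DKL x then (1:ℝ) else 0) = 1 - ind := by
    rw [hind]
    by_cases h : DKL x < τ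
    · simp [h, not_le.mpr h]
    · simp [h, not_lt.mp h]
  rw [hind']
  have hepsS : ∑ a, π x a * eps x a = C - ∑ a, π x a * rbar x a := by
    simp only [heps, mul_sub, Finset.sum_sub_distrib, hC]
  have hS : ∑ a, π x a * (rbar x a - rhat x a)
      = -(∑ a, π x a * eps x a) := by
    rw [hepsS]
    simp only [mul_sub, Finset.sum_sub_distrib, hC]
    ring
  rw [hS, hepsS]
  ring
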